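/- arXiv:2510.10372 — 4 statements merged into one kernel-verified Lean document; each statement's English description precedes it below -/
import Mathlib

section
/- If S and G are survival functions on [0,∞) with S(0)=G(0)=1, S nonincreasing càdlàg, and S = S_* (the true conditional survival function of the event time T), then the expectation of the doubly robust transformation 𝒯_t(S,G)(X,Δ) := -S(t){ 1(X≤t)Δ/(S(X)G(X−)) + ∫_{(0, X∧t]} dS(s)/(S(s)S(s−)G(s−)) } is zero, where X = T∧C, Δ = 1(T≤C), and T ⟂ C. -/
/-!
Let `F` be the law of `T`. Conditioning on `T` and using independence,
`E[Δ 1(X ≤ t) / (S(X) G(X−))] = ∫_{(0,t]} P(C ≥ x) / (S(x) G(x−)) dF(x)`; by Fubini,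
`E[∫_{(0,X∧t]} dνS / (S S₋ G₋)] = ∫_{(0,t]} P(T ≥ s) P(C ≥ s) / (S(s) S(s−) G(s−)) dνS(s)`.
When `S` is the survival function of `T`, `S(s−) = P(T ≥ s)` and `νS = F` on `(0,t]`, so the two
terms of `𝒯_t(S,G)` have the same mean.
-/

open MeasureTheory ProbabilityTheory Function Set Filter Topology

section LeftLimits

variable {f : ℝ → ℝ} {a x : ℝ}

lemma AntitoneOn.antitone_comp_max (hf : AntitoneOn f (Ici a)) :
    Antitone fun y => f (max y a) := fun _ _ hyz =>
  hf (le_max_right _ a) (le_max_right _ a) (max_le_max hyz le_rfl)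

lemma AntitoneOn.leftLim_eq_leftLim_comp_max (hf : AntitoneOn f (Ici a)) (hx : a < x) :
    leftLim f x = leftLim (fun y => f (max y a)) x := by
  have hev : (fun y => f (max y a)) =ᶠ[𝓝[<] x] f := by
    filter_upwards [nhdsWithin_le_nhds (Ioi_mem_nhds hx)] with y hy
    rw [max_eq_left hy.le]
  exact leftLim_eq_of_tendsto ((hf.antitone_comp_max.tendsto_leftLim x).congr' hev)

lemma AntitoneOn.antitoneOn_leftLim (hf : AntitoneOn f (Ici a)) :
    AntitoneOn (leftLim f) (Ioi a) := fun y hy z hz hyz => by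
  rw [hf.leftLim_eq_leftLim_comp_max hy, hf.leftLim_eq_leftLim_comp_max hz]
  exact hf.antitone_comp_max.leftLim hyz

lemma AntitoneOn.le_leftLim (hf : AntitoneOn f (Ici a)) (hx : a < x) : f x ≤ leftLim f x := by
  rw [hf.leftLim_eq_leftLim_comp_max hx]
  simpa [max_eq_left hx.le] using hf.antitone_comp_max.le_leftLim (le_refl x)

lemma AntitoneOn.aemeasurable_restrict_Ioc (hf : AntitoneOn f (Ici a)) (ν : Measure ℝ) (b : ℝ) :
    AEMeasurable f (ν.restrict (Ioc a b)) :=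
  aemeasurable_restrict_of_antitoneOn measurableSet_Ioc
    (hf.mono (Ioc_subset_Ioi_self.trans Ioi_subset_Ici_self))

lemma AntitoneOn.aemeasurable_leftLim_restrict_Ioc (hf : AntitoneOn f (Ici a)) (ν : Measure ℝ)
    (b : ℝ) : AEMeasurable (leftLim f) (ν.restrict (Ioc a b)) :=
  aemeasurable_restrict_of_antitoneOn measurableSet_Ioc
    (hf.antitoneOn_leftLim.mono Ioc_subset_Ioi_self)

end LeftLimits

lemma integrableOn_inv_of_le {α : Type*} [MeasurableSpace α] {ν : Measure α} [IsFiniteMeasure ν]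
    {s : Set α} {h : α → ℝ} {c : ℝ} (hs : MeasurableSet s) (hh : AEMeasurable h (ν.restrict s))
    (hc : 0 < c) (hle : ∀ x ∈ s, c ≤ h x) :
    IntegrableOn (fun x => (h x)⁻¹) s ν :=
  Integrable.of_bound hh.inv.aestronglyMeasurable c⁻¹ <| (ae_restrict_iff' hs).2 <|
    Eventually.of_forall fun x hx => by
      rw [Real.norm_eq_abs, abs_inv, abs_of_pos (hc.trans_le (hle x hx))]
      exact inv_anti₀ hc (hle x hx)

lemma MeasureTheory.Measure.restrict_Ioc_eq_of_forall_Ioc {ρ ν : Measure ℝ} [IsFiniteMeasure ρ]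
    {a₀ : ℝ} (h : ∀ a b, a₀ ≤ a → a ≤ b → ρ (Ioc a b) = ν (Ioc a b)) (t : ℝ) :
    ρ.restrict (Ioc a₀ t) = ν.restrict (Ioc a₀ t) := by
  have h' : ∀ a b, a₀ ≤ a → ρ (Ioc a b) = ν (Ioc a b) := fun a b ha => by
    rcases le_or_gt a b with hab | hab
    · exact h a b ha hab
    · simp [Ioc_eq_empty_of_le hab.le]
  refine Measure.ext_of_Ioc_finite _ _ ?_ fun a b _ => ?_
  · simpa using h' a₀ t le_rfl
  · simpa [Measure.restrict_apply measurableSet_Ioc, Ioc_inter_Ioc] using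
      h' (a ⊔ a₀) (b ⊓ t) le_sup_right

lemma integrable_prod_ite_fst_le_snd {ρ κ : Measure ℝ} [IsFiniteMeasure κ] {g : ℝ → ℝ}
    (hg : Integrable g ρ) :
    Integrable (fun p : ℝ × ℝ => if p.1 ≤ p.2 then g p.1 else 0) (ρ.prod κ) := by
  refine ((hg.comp_fst κ).indicator (measurableSet_le measurable_fst measurable_snd)).congr
    (Eventually.of_forall fun p => ?_)
  simp [indicator_apply]

section Survival

variable {Ω : Type*} [MeasurableSpace Ω] {μ : Measure Ω} [IsFiniteMeasure μ] {T C : Ω → ℝ}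

lemma tendsto_measure_lt_nhdsLT (hT : Measurable T) (s : ℝ) :
    Tendsto (fun u => μ {ω | u < T ω}) (𝓝[<] s) (𝓝 (μ {ω | s ≤ T ω})) := by
  -- continuity from above of `μ` along the sets `{u < T}` decreasing as `u ↑ s`, read in `ℝᵒᵈ`
  have hlim := tendsto_measure_biInter_gt (μ := μ) (a := OrderDual.toDual s)
    (s := fun u : ℝᵒᵈ => {ω | OrderDual.ofDual u < T ω})
    (fun _ _ => (measurableSet_lt measurable_const hT).nullMeasurableSet)
    (fun i j _ hij ω (hω : OrderDual.ofDual i < T ω) =>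
      (show OrderDual.ofDual j < T ω from lt_of_le_of_lt hij hω))
    ⟨OrderDual.toDual (s - 1), OrderDual.toDual_lt_toDual.mpr (sub_one_lt s), measure_ne_top _ _⟩
  have hInter : (⋂ r > OrderDual.toDual s, {ω | OrderDual.ofDual r < T ω}) = {ω | s ≤ T ω} := by
    ext ω
    simp only [mem_iInter, mem_ofPred_eq]
    exact ⟨fun h => le_of_forall_lt fun r hr => h (OrderDual.toDual r) hr,
      fun h r hr => lt_of_lt_of_le hr h⟩
  rwa [hInter] at hlim

lemma leftLim_eq_toReal_measure_le (hT : Measurable T) {S : ℝ → ℝ}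
    (hS : ∀ s, 0 ≤ s → S s = (μ {ω | s < T ω}).toReal) {s : ℝ} (hs : 0 < s) :
    leftLim S s = (μ {ω | s ≤ T ω}).toReal := by
  refine leftLim_eq_of_tendsto (((ENNReal.tendsto_toReal (measure_ne_top _ _)).comp
    (tendsto_measure_lt_nhdsLT hT s)).congr' ?_)
  filter_upwards [nhdsWithin_le_nhds (Ioi_mem_nhds hs)] with u hu using (hS u hu.le).symm

lemma toReal_map_apply_Ioc (hT : Measurable T) {a b : ℝ} (hab : a ≤ b) :
    (μ.map T (Ioc a b)).toReal = (μ {ω | a < T ω}).toReal - (μ {ω | b < T ω}).toReal := by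
  have hsub : {ω | b < T ω} ⊆ {ω | a < T ω} := fun ω hω => lt_of_le_of_lt hab hω
  have hdiff : T ⁻¹' Ioc a b = {ω | a < T ω} \ {ω | b < T ω} := by
    ext ω
    simp [not_lt]
  rw [Measure.map_apply hT measurableSet_Ioc, hdiff,
    measure_sdiff hsub (measurableSet_lt measurable_const hT).nullMeasurableSet
      (measure_ne_top _ _),
    ENNReal.toReal_sub_of_le (measure_mono hsub) (measure_ne_top _ _)]

lemma map_restrict_Ioc_eq_of_survival (hT : Measurable T) {S : ℝ → ℝ} {νS : Measure ℝ}
    [IsFiniteMeasure νS] (hS : ∀ s, 0 ≤ s → S s = (μ {ω | s < T ω}).toReal)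
    (hν : ∀ a b, 0 ≤ a → a ≤ b → (νS (Ioc a b)).toReal = S a - S b) (t : ℝ) :
    (μ.map T).restrict (Ioc 0 t) = νS.restrict (Ioc 0 t) := by
  refine Measure.restrict_Ioc_eq_of_forall_Ioc (fun a b ha hab => ?_) t
  rw [← ENNReal.toReal_eq_toReal_iff' (measure_ne_top _ _) (measure_ne_top _ _),
    toReal_map_apply_Ioc hT hab, hν a b ha hab, hS a ha, hS b (ha.trans hab)]

lemma integrable_ite_le (hT : Measurable T) (hC : Measurable C) (hInd : IndepFun T C μ)
    {g : ℝ → ℝ} (hg : Integrable g (μ.map T)) :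
    Integrable (fun ω => if T ω ≤ C ω then g (T ω) else 0) μ := by
  have hF := integrable_prod_ite_fst_le_snd (κ := μ.map C) hg
  rw [← (indepFun_iff_map_prod_eq_prod_map_map hT.aemeasurable hC.aemeasurable).mp hInd] at hF
  exact (integrable_map_measure hF.aestronglyMeasurable (hT.prodMk hC).aemeasurable).mp hF

lemma integral_ite_le (hT : Measurable T) (hC : Measurable C) (hInd : IndepFun T C μ)
    {g : ℝ → ℝ} (hg : Integrable g (μ.map T)) :
    ∫ ω, (if T ω ≤ C ω then g (T ω) else 0) ∂μ =
      ∫ x, (μ {ω | x ≤ C ω}).toReal * g x ∂(μ.map T) := by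
  have hmap := (indepFun_iff_map_prod_eq_prod_map_map hT.aemeasurable hC.aemeasurable).mp hInd
  have hF := integrable_prod_ite_fst_le_snd (κ := μ.map C) hg
  have hinner : ∀ x, ∫ c, (if x ≤ c then g x else 0) ∂(μ.map C)
      = (μ {ω | x ≤ C ω}).toReal * g x := fun x => by
    have : (fun c => if x ≤ c then g x else 0) = (Ici x).indicator fun _ => g x := by
      ext c
      simp [indicator_apply]
    rw [this, integral_indicator_const _ measurableSet_Ici, measureReal_def,
      Measure.map_apply hC measurableSet_Ici, smul_eq_mul]
    rfl
  rw [← integral_map (f := fun p : ℝ × ℝ => if p.1 ≤ p.2 then g p.1 else 0)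
    (hT.prodMk hC).aemeasurable (hmap ▸ hF.aestronglyMeasurable), hmap, integral_prod _ hF]
  simp only [hinner]

variable {ν : Measure ℝ} [IsFiniteMeasure ν] {X : Ω → ℝ} {f : ℝ → ℝ}

lemma integrable_prod_indicator_Iic (hX : Measurable X) (hf : Integrable f ν) :
    Integrable (uncurry fun ω s => (Iic (X ω)).indicator f s) (μ.prod ν) := by
  refine ((hf.comp_snd μ).indicator
    (measurableSet_le measurable_snd (hX.comp measurable_fst))).congr
    (Eventually.of_forall fun p => ?_)
  simp [indicator_apply, uncurry]

lemma integrable_setIntegral_Iic (hX : Measurable X) (hf : Integrable f ν) :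
    Integrable (fun ω => ∫ s in Iic (X ω), f s ∂ν) μ := by
  simpa only [uncurry_apply_pair, integral_indicator measurableSet_Iic] using
    (integrable_prod_indicator_Iic (μ := μ) hX hf).integral_prod_left

lemma integral_setIntegral_Iic (hX : Measurable X) (hf : Integrable f ν) :
    ∫ ω, ∫ s in Iic (X ω), f s ∂ν ∂μ = ∫ s, (μ {ω | s ≤ X ω}).toReal * f s ∂ν := by
  simp only [← integral_indicator measurableSet_Iic]
  rw [integral_integral_swap (integrable_prod_indicator_Iic hX hf)]
  congr 1
  ext s
  have : (fun ω => (Iic (X ω)).indicator f s) = {ω | s ≤ X ω}.indicator fun _ => f s := by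
    ext ω
    simp [indicator_apply]
  rw [this, integral_indicator_const _ (measurableSet_le measurable_const hX), measureReal_def,
    smul_eq_mul]

lemma integral_map_eq_integral_restrict_of_survival (hT : Measurable T) (hInd : IndepFun T C μ)
    {S G : ℝ → ℝ} {νS : Measure ℝ} [IsFiniteMeasure νS] {t : ℝ}
    (hS : ∀ s, 0 ≤ s → S s = (μ {ω | s < T ω}).toReal)
    (hν : ∀ a b, 0 ≤ a → a ≤ b → (νS (Ioc a b)).toReal = S a - S b)
    (hSpos : ∀ s ∈ Ioc 0 t, 0 < S s) :
    ∫ x, (μ {ω | x ≤ C ω}).toReal * (Ioc 0 t).indicator (fun y => (S y * leftLim G y)⁻¹) x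
        ∂(μ.map T)
      = ∫ s, (μ {ω | s ≤ min (T ω) (C ω)}).toReal * (S s * leftLim S s * leftLim G s)⁻¹
        ∂(νS.restrict (Ioc 0 t)) := by
  simp only [← indicator_mul_right (Ioc 0 t) fun x => (μ {ω | x ≤ C ω}).toReal]
  rw [integral_indicator measurableSet_Ioc, map_restrict_Ioc_eq_of_survival hT hS hν t]
  refine setIntegral_congr_fun measurableSet_Ioc fun s hs => ?_
  have hTs : leftLim S s = (μ {ω | s ≤ T ω}).toReal := leftLim_eq_toReal_measure_le hT hS hs.1
  have hTs_pos : 0 < leftLim S s := by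
    refine (hSpos s hs).trans_le ?_
    rw [hTs, hS s hs.1.le]
    exact ENNReal.toReal_mono (measure_ne_top _ _) (measure_mono fun ω (hω : s < T ω) => hω.le)
  have hX : μ {ω | s ≤ min (T ω) (C ω)} = μ {ω | s ≤ T ω} * μ {ω | s ≤ C ω} := by
    simpa [le_min_iff, preimage, ofPred_and] using
      hInd.measure_inter_preimage_eq_mul (Ici s) (Ici s) measurableSet_Ici measurableSet_Ici
  rw [hX, ENNReal.toReal_mul, ← hTs]
  field_simp

end Survival

/-- The paper's `𝒯_t(S,G)(x,δ)`, with `∫ f dS` written as `-∫ f dνS`. -/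
noncomputable def drTransform (S G : ℝ → ℝ) (νS : Measure ℝ) (t x : ℝ) (δ : Prop) [Decidable δ] :
    ℝ :=
  -(S t) * ((if x ≤ t ∧ δ then (1:ℝ) else 0) / (S x * leftLim G x)
    - ∫ s in Ioc (0:ℝ) (min x t), (S s * leftLim S s * leftLim G s)⁻¹ ∂νS)

lemma drTransform_min_eq {S G : ℝ → ℝ} {νS : Measure ℝ} {t x c : ℝ} (hx : 0 < x) :
    drTransform S G νS t (min x c) (x ≤ c) =
      -(S t) * ((if x ≤ c then (Ioc 0 t).indicator (fun y => (S y * leftLim G y)⁻¹) x else 0)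
        - ∫ s in Iic (min x c), (S s * leftLim S s * leftLim G s)⁻¹ ∂(νS.restrict (Ioc 0 t))) := by
  have hIoc : Ioc 0 (min (min x c) t) = Iic (min x c) ∩ Ioc 0 t := by
    ext s
    simp only [mem_Ioc, mem_inter_iff, mem_Iic, le_min_iff]
    tauto
  rw [drTransform, Measure.restrict_restrict measurableSet_Iic, ← hIoc]
  congr 2
  by_cases hxc : x ≤ c
  · simp [hxc, indicator_apply, hx, ite_div, mul_inv_rev]
  · simp [hxc]

theorem dr_transform_zero_when_S_correct_general
    {Ω : Type*} [MeasurableSpace Ω] (μ : Measure Ω) [IsProbabilityMeasure μ]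
    (T C : Ω → ℝ) (hT : Measurable T) (hC : Measurable C)
    (hTpos : ∀ ω, 0 < T ω)
    (hInd : IndepFun T C μ)
    (S G : ℝ → ℝ) (νS : Measure ℝ) [IsFiniteMeasure νS]
    (t : ℝ)
    (hSanti : AntitoneOn S (Set.Ici 0)) (hGanti : AntitoneOn G (Set.Ici 0))
    (hν : ∀ a b : ℝ, 0 ≤ a → a ≤ b → (νS (Set.Ioc a b)).toReal = S a - S b)
    (cS cG : ℝ) (hcS : 0 < cS) (hcG : 0 < cG)
    (hSpos : ∀ s ∈ Set.Ioc (0:ℝ) t, cS ≤ S s)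
    (hGpos : ∀ s ∈ Set.Ioc (0:ℝ) t, cG ≤ G s)
    (hStrue : ∀ s : ℝ, 0 ≤ s → S s = (μ {ω | s < T ω}).toReal) :
    ∫ ω, (-(S t) *
        ((if min (T ω) (C ω) ≤ t ∧ T ω ≤ C ω then (1:ℝ) else 0)
            / (S (min (T ω) (C ω)) * leftLim G (min (T ω) (C ω)))
         - ∫ s in Set.Ioc (0:ℝ) (min (min (T ω) (C ω)) t),
             (S s * leftLim S s * leftLim G s)⁻¹ ∂νS)) ∂μ = 0 := by
  have hS_pos : ∀ s ∈ Ioc (0:ℝ) t, 0 < S s := fun s hs => hcS.trans_le (hSpos s hs)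
  have hSL : ∀ s ∈ Ioc (0:ℝ) t, cS ≤ leftLim S s := fun s hs =>
    (hSpos s hs).trans (hSanti.le_leftLim hs.1)
  have hGL : ∀ s ∈ Ioc (0:ℝ) t, cG ≤ leftLim G s := fun s hs =>
    (hGpos s hs).trans (hGanti.le_leftLim hs.1)
  have hg : Integrable ((Ioc 0 t).indicator fun y => (S y * leftLim G y)⁻¹) (μ.map T) :=
    (integrable_indicator_iff measurableSet_Ioc).2 <| integrableOn_inv_of_le measurableSet_Ioc
      ((hSanti.aemeasurable_restrict_Ioc _ t).mul (hGanti.aemeasurable_leftLim_restrict_Ioc _ t))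
      (mul_pos hcS hcG) fun s hs => mul_le_mul (hSpos s hs) (hGL s hs) hcG.le (hS_pos s hs).le
  have hf : Integrable (fun s => (S s * leftLim S s * leftLim G s)⁻¹) (νS.restrict (Ioc 0 t)) :=
    integrableOn_inv_of_le measurableSet_Ioc
      (((hSanti.aemeasurable_restrict_Ioc _ t).mul
        (hSanti.aemeasurable_leftLim_restrict_Ioc _ t)).mul
        (hGanti.aemeasurable_leftLim_restrict_Ioc _ t))
      (by positivity) fun s hs =>
        mul_le_mul (mul_le_mul (hSpos s hs) (hSL s hs) hcS.le (hS_pos s hs).le) (hGL s hs) hcG.le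
          (mul_pos (hS_pos s hs) (hcS.trans_le (hSL s hs))).le
  change ∫ ω, drTransform S G νS t (min (T ω) (C ω)) (T ω ≤ C ω) ∂μ = 0
  simp only [drTransform_min_eq (hTpos _)]
  rw [integral_const_mul, integral_sub (integrable_ite_le hT hC hInd hg)
      (integrable_setIntegral_Iic (hT.min hC) hf), integral_ite_le hT hC hInd hg,
    integral_setIntegral_Iic (hT.min hC) hf,
    integral_map_eq_integral_restrict_of_survival hT hInd hStrue hν hS_pos, sub_self, mul_zero]

/-- If `S` and `G` are survival functions on `[0,∞)` with `S(0) = G(0) = 1`,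
`S` nonincreasing càdlàg, and `S = S_*` (the true survival function of the event time `T`),
then the expectation of the doubly robust transformation
`𝒯_t(S,G)(X,Δ) = -S(t){1(X≤t)Δ/(S(X)G(X−)) + ∫_{(0,X∧t]} dS(s)/(S(s)S(s−)G(s−))}`
is zero, where `X = T ∧ C`, `Δ = 1(T ≤ C)`, and `T ⟂ C`.  The Lebesgue–Stieltjes measure
`νS` of the decrease of `S` satisfies `νS((a,b]) = S(a) − S(b)`, so that
`∫_{(0,u]} f dS = −∫_{(0,u]} f dνS`. -/
theorem dr_transform_zero_when_S_correct
    {Ω : Type*} [MeasurableSpace Ω] (μ : Measure Ω) [IsProbabilityMeasure μ]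
    (T C : Ω → ℝ) (hT : Measurable T) (hC : Measurable C)
    (hTpos : ∀ ω, 0 < T ω) (hCpos : ∀ ω, 0 < C ω)
    (hInd : IndepFun T C μ)
    (S G : ℝ → ℝ) (νS : Measure ℝ) [IsFiniteMeasure νS]
    (t : ℝ) (ht : 0 < t)
    (hS0 : S 0 = 1) (hG0 : G 0 = 1)
    (hSanti : AntitoneOn S (Set.Ici 0)) (hGanti : AntitoneOn G (Set.Ici 0))
    (hScadlag : ∀ x : ℝ, ContinuousWithinAt S (Set.Ici x) x)
    (hν : ∀ a b : ℝ, 0 ≤ a → a ≤ b → (νS (Set.Ioc a b)).toReal = S a - S b)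
    (cS cG : ℝ) (hcS : 0 < cS) (hcG : 0 < cG)
    (hSpos : ∀ s ∈ Set.Ioc (0:ℝ) t, cS ≤ S s)
    (hGpos : ∀ s ∈ Set.Ioc (0:ℝ) t, cG ≤ G s)
    (hStrue : ∀ s : ℝ, 0 ≤ s → S s = (μ {ω | s < T ω}).toReal) :
    ∫ ω, (-(S t) *
        ((if min (T ω) (C ω) ≤ t ∧ T ω ≤ C ω then (1:ℝ) else 0)
            / (S (min (T ω) (C ω)) * leftLim G (min (T ω) (C ω)))
         - ∫ s in Set.Ioc (0:ℝ) (min (min (T ω) (C ω)) t),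
             (S s * leftLim S s * leftLim G s)⁻¹ ∂νS)) ∂μ = 0 :=
  dr_transform_zero_when_S_correct_general μ T C hT hC hTpos hInd S G νS t hSanti hGanti hν cS cG
    hcS hcG hSpos hGpos hStrue
end

section
/- Inverse-probability-of-censoring-weighting identity: for independent positive random variables T,C with G_*(t−)>0, S_*(t) = 1 − E[1(X ≤ t) Δ / G_*(X−)], where X = T∧C and Δ = 1(T ≤ C). -/
/-!
Given `T = s`, the observation is uncensored with probability `P(C ≥ s)`, and the weight
`1 / G_*(s−)` is exactly the reciprocal of that probability, because `G_*(s−) = P(C ≥ s)`.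
So by independence (Fubini over the product of the laws of `T` and `C`) the expectation collapses
to `P(T ≤ t) = 1 − S_*(t)`.
-/

open MeasureTheory ProbabilityTheory Function Set

lemma leftLim_measureReal_Ioi (ν : Measure ℝ) [IsProbabilityMeasure ν] (s : ℝ) :
    leftLim (fun x ↦ ν.real (Ioi x)) s = ν.real (Ici s) := by
  have hsurv : (fun x ↦ ν.real (Ioi x)) = fun x ↦ 1 - cdf ν x := by
    ext x
    rw [cdf_eq_real, ← compl_Iic, probReal_compl_eq_one_sub measurableSet_Iic]
  have hIci : ν.real (Ici s) = 1 - leftLim (cdf ν) s := by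
    have h := (cdf ν).measure_Ici (tendsto_cdf_atTop ν) s
    rw [measure_cdf] at h
    rw [measureReal_def, h, ENNReal.toReal_ofReal]
    exact sub_nonneg.2 (((monotone_cdf ν).leftLim_le le_rfl).trans (cdf_le_one ν s))
  rw [hsurv, hIci]
  exact leftLim_eq_of_tendsto (((monotone_cdf ν).tendsto_leftLim s).const_sub 1)

-- The integrand as a function of `(T, C)`, with `κ` the law of `C`, so `κ.real (Ici s) = G_*(s−)`.
noncomputable def ipcwWeight (κ : Measure ℝ) (t : ℝ) (p : ℝ × ℝ) : ℝ :=
  if p.1 ≤ t ∧ p.1 ≤ p.2 then (κ.real (Ici p.1))⁻¹ else 0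

lemma antitone_measureReal_Ici (κ : Measure ℝ) [IsFiniteMeasure κ] :
    Antitone fun s ↦ κ.real (Ici s) :=
  fun _ _ h ↦ measureReal_mono (Ici_subset_Ici.2 h)

lemma measurable_ipcwWeight (κ : Measure ℝ) [IsFiniteMeasure κ] (t : ℝ) :
    Measurable (ipcwWeight κ t) :=
  Measurable.ite ((measurableSet_le measurable_fst measurable_const).inter
    (measurableSet_le measurable_fst measurable_snd))
    ((antitone_measureReal_Ici κ).measurable.comp measurable_fst).inv measurable_const

lemma norm_ipcwWeight_le (κ : Measure ℝ) [IsFiniteMeasure κ] {t : ℝ} (ht : 0 < κ.real (Ici t))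
    (p : ℝ × ℝ) : ‖ipcwWeight κ t p‖ ≤ (κ.real (Ici t))⁻¹ := by
  unfold ipcwWeight
  split_ifs with h
  · rw [Real.norm_of_nonneg (inv_nonneg.2 measureReal_nonneg)]
    exact inv_anti₀ ht (antitone_measureReal_Ici κ h.1)
  · simp [ht.le]

lemma integral_ipcwWeight_left (κ : Measure ℝ) [IsFiniteMeasure κ] {t : ℝ}
    (ht : 0 < κ.real (Ici t)) (s : ℝ) :
    ∫ c, ipcwWeight κ t (s, c) ∂κ = (Iic t).indicator 1 s := by
  by_cases hs : s ≤ t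
  · have hpos : 0 < κ.real (Ici s) := ht.trans_le (antitone_measureReal_Ici κ hs)
    have hind : (fun c ↦ ipcwWeight κ t (s, c)) = (Ici s).indicator fun _ ↦ (κ.real (Ici s))⁻¹ := by
      ext c
      simp [ipcwWeight, indicator_apply, hs]
    rw [hind, integral_indicator_const _ measurableSet_Ici, smul_eq_mul, mul_inv_cancel₀ hpos.ne',
      indicator_of_mem (mem_Iic.2 hs), Pi.one_apply]
  · simp [ipcwWeight, hs]

theorem integral_ipcwWeight_prod (ν κ : Measure ℝ) [IsFiniteMeasure ν] [IsFiniteMeasure κ] {t : ℝ}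
    (ht : 0 < κ.real (Ici t)) :
    ∫ p, ipcwWeight κ t p ∂(ν.prod κ) = ν.real (Iic t) := by
  rw [integral_prod _ (Integrable.of_bound (measurable_ipcwWeight κ t).aestronglyMeasurable _
    (ae_of_all _ (norm_ipcwWeight_le κ ht)))]
  simp_rw [integral_ipcwWeight_left κ ht]
  exact integral_indicator_one measurableSet_Iic

theorem ipcw_identity_general
    {Ω : Type*} [MeasurableSpace Ω] (μ : Measure Ω) [IsProbabilityMeasure μ]
    (T C : Ω → ℝ) (hT : Measurable T) (hC : Measurable C)
    (hInd : IndepFun T C μ)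
    (t : ℝ) (ht : 0 < t)
    (Gstar : ℝ → ℝ) (hGstar : ∀ s : ℝ, Gstar s = (μ {ω | s < C ω}).toReal)
    (hGpos : ∀ s ∈ Set.Ioc (0:ℝ) t, 0 < leftLim Gstar s) :
    (μ {ω | t < T ω}).toReal
      = 1 - ∫ ω, (if min (T ω) (C ω) ≤ t ∧ T ω ≤ C ω then
          (leftLim Gstar (min (T ω) (C ω)))⁻¹ else 0) ∂μ := by
  have := Measure.isProbabilityMeasure_map (μ := μ) hT.aemeasurable
  have := Measure.isProbabilityMeasure_map (μ := μ) hC.aemeasurable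
  have hleft : leftLim Gstar = fun s ↦ (μ.map C).real (Ici s) := by
    have hG : Gstar = fun s ↦ (μ.map C).real (Ioi s) := by
      ext s
      rw [hGstar, map_measureReal_apply hC measurableSet_Ioi]
      rfl
    ext s
    rw [hG, leftLim_measureReal_Ioi]
  have hintegrand : ∀ ω, (if min (T ω) (C ω) ≤ t ∧ T ω ≤ C ω then
      (leftLim Gstar (min (T ω) (C ω)))⁻¹ else 0) = ipcwWeight (μ.map C) t (T ω, C ω) := by
    intro ω
    by_cases h : T ω ≤ C ω <;> simp [ipcwWeight, h, hleft]
  have hsurv : (μ {ω | t < T ω}).toReal = 1 - (μ.map T).real (Iic t) := by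
    rw [← probReal_compl_eq_one_sub measurableSet_Iic, compl_Iic,
      map_measureReal_apply hT measurableSet_Ioi]
    rfl
  rw [hsurv, integral_congr_ae (ae_of_all _ hintegrand),
    ← integral_map (hT.prodMk hC).aemeasurable (measurable_ipcwWeight _ t).aestronglyMeasurable,
    hInd.map_prod_eq_prod_map_map hT.aemeasurable hC.aemeasurable,
    integral_ipcwWeight_prod _ _ (congrFun hleft t ▸ hGpos t ⟨ht, le_rfl⟩)]

/-- Inverse-probability-of-censoring-weighting identity: for independent
positive random variables `T, C` with `G_*(s−) > 0` on `(0, t]`,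
`S_*(t) = 1 − E[1(X ≤ t) Δ / G_*(X−)]` where `X = T ∧ C` and `Δ = 1(T ≤ C)`. -/
theorem ipcw_identity
    {Ω : Type*} [MeasurableSpace Ω] (μ : Measure Ω) [IsProbabilityMeasure μ]
    (T C : Ω → ℝ) (hT : Measurable T) (hC : Measurable C)
    (hTpos : ∀ ω, 0 < T ω) (hCpos : ∀ ω, 0 < C ω)
    (hInd : IndepFun T C μ)
    (t : ℝ) (ht : 0 < t)
    (Gstar : ℝ → ℝ) (hGstar : ∀ s : ℝ, Gstar s = (μ {ω | s < C ω}).toReal)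
    (hGpos : ∀ s ∈ Set.Ioc (0:ℝ) t, 0 < leftLim Gstar s) :
    (μ {ω | t < T ω}).toReal
      = 1 - ∫ ω, (if min (T ω) (C ω) ≤ t ∧ T ω ≤ C ω then
          (leftLim Gstar (min (T ω) (C ω)))⁻¹ else 0) ∂μ :=
  ipcw_identity_general μ T C hT hC hInd t ht Gstar hGstar hGpos
end

section
/- Survival-to-hazard stability (discrete time): with S, Ŝ product-form survival functions from hazards λ, λ̂ as above, if S(t^J) ≥ c > 0, then for each j, |λ̂(t^j) − λ(t^j)| ≤ (2/c) · max_{i ≤ j} |Ŝ(t^i) − S(t^i)|. -/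
/-!
Write `S(t^j−) = ∏_{i<j} (1 − λ(t^i))` for the survival just before `t^j`, so that
`S(t^j) = (1 − λ(t^j)) S(t^j−)`. Subtracting the two factorizations gives
`S(t^j−) (λ̂ − λ)(t^j) = (Ŝ − S)(t^j−) (1 − λ̂(t^j)) − (Ŝ − S)(t^j)`, and `S(t^j−)` is an
earlier survival value (or `1`), so both terms on the right are at most the sup-norm
difference. Dividing by `S(t^j−) ≥ S(t^J) ≥ c` gives the bound.
-/

open Finset

section Survival

variable {ι : Type*} [LinearOrder ι] [LocallyFiniteOrderBot ι]

def survival (lam : ι → ℝ) (i : ι) : ℝ := ∏ k ∈ Iic i, (1 - lam k)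

def survivalLeft (lam : ι → ℝ) (i : ι) : ℝ := ∏ k ∈ Iio i, (1 - lam k)

theorem survival_eq_mul_survivalLeft (lam : ι → ℝ) (i : ι) :
    survival lam i = (1 - lam i) * survivalLeft lam i :=
  (mul_prod_Iio_eq_prod_Iic (f := fun k => 1 - lam k) i).symm

theorem Finset.Iio_eq_Iic_max' {j : ι} (h : (Iio j).Nonempty) : Iio j = Iic ((Iio j).max' h) := by
  have hmax : (Iio j).max' h < j := mem_Iio.1 ((Iio j).max'_mem h)
  ext k
  exact ⟨fun hk => mem_Iic.2 ((Iio j).le_max' k hk),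
    fun hk => mem_Iio.2 ((mem_Iic.1 hk).trans_lt hmax)⟩

theorem survival_le_survivalLeft {lam : ι → ℝ} (hlam : ∀ i, lam i ∈ Set.Icc (0 : ℝ) 1)
    {j n : ι} (hjn : j ≤ n) : survival lam n ≤ survivalLeft lam j :=
  prod_anti_set_of_le_one (fun k => sub_nonneg.2 (hlam k).2)
    (fun k => sub_le_self 1 (hlam k).1) fun _ hk => mem_Iic.2 ((mem_Iio.1 hk).le.trans hjn)

theorem abs_survivalLeft_sub_le {lam lamhat : ι → ℝ} {j : ι} {M : ℝ} (hM₀ : 0 ≤ M)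
    (hM : ∀ i < j, |survival lamhat i - survival lam i| ≤ M) :
    |survivalLeft lamhat j - survivalLeft lam j| ≤ M := by
  rcases (Iio j).eq_empty_or_nonempty with hempty | hne
  · simpa only [survivalLeft, hempty, prod_empty, sub_self, abs_zero] using hM₀
  · have hlt : (Iio j).max' hne < j := mem_Iio.1 ((Iio j).max'_mem hne)
    rw [survivalLeft, survivalLeft, Iio_eq_Iic_max' hne]
    exact hM _ hlt

end Survival

theorem abs_hazard_sub_le {Q Qhat lam lamhat c M : ℝ} (hc : 0 < c) (hcQ : c ≤ Q)
    (hlamhat : lamhat ∈ Set.Icc (0 : ℝ) 1) (hQ : |Qhat - Q| ≤ M)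
    (hS : |(1 - lamhat) * Qhat - (1 - lam) * Q| ≤ M) :
    |lamhat - lam| ≤ 2 / c * M := by
  have hstep : |1 - lamhat| ≤ 1 := abs_le.2 ⟨by linarith [hlamhat.2], by linarith [hlamhat.1]⟩
  have hkey : Q * |lamhat - lam| ≤ 2 * M :=
    calc Q * |lamhat - lam| = |Q * (lamhat - lam)| := by
          rw [abs_mul, abs_of_pos (hc.trans_le hcQ)]
      _ = |(Qhat - Q) * (1 - lamhat) - ((1 - lamhat) * Qhat - (1 - lam) * Q)| := by
          congr 1; ring
      _ ≤ |Qhat - Q| * |1 - lamhat| + |(1 - lamhat) * Qhat - (1 - lam) * Q| := by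
          rw [← abs_mul]; exact abs_sub _ _
      _ ≤ M * 1 + M := by gcongr; exact (abs_nonneg _).trans hQ
      _ = 2 * M := by ring
  rw [div_mul_eq_mul_div, le_div_iff₀' hc]
  exact (mul_le_mul_of_nonneg_right hcQ (abs_nonneg _)).trans hkey

theorem abs_hazard_sub_le_of_abs_survival_sub_le {ι : Type*} [LinearOrder ι]
    [LocallyFiniteOrderBot ι] {lam lamhat : ι → ℝ} (hlam : ∀ i, lam i ∈ Set.Icc (0 : ℝ) 1)
    {j n : ι} (hlamhat : lamhat j ∈ Set.Icc (0 : ℝ) 1) (hjn : j ≤ n) {c M : ℝ} (hc : 0 < c)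
    (hSn : c ≤ survival lam n) (hM : ∀ i ≤ j, |survival lamhat i - survival lam i| ≤ M) :
    |lamhat j - lam j| ≤ 2 / c * M := by
  have hM₀ : 0 ≤ M := (abs_nonneg _).trans (hM j le_rfl)
  refine abs_hazard_sub_le hc (hSn.trans (survival_le_survivalLeft hlam hjn)) hlamhat
    (abs_survivalLeft_sub_le hM₀ fun i hi => hM i hi.le) ?_
  simpa only [survival_eq_mul_survivalLeft] using hM j le_rfl

theorem survival_to_hazard_stability_general
    (J : ℕ) (hJ : 0 < J)
    (tt : Fin J → ℝ) (htt : StrictMono tt)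
    (lam lamhat : Fin J → ℝ)
    (hlam : ∀ i, lam i ∈ Set.Icc (0:ℝ) 1)
    (hlamhat : ∀ i, lamhat i ∈ Set.Icc (0:ℝ) 1)
    (S Shat : Fin J → ℝ)
    (hS : ∀ i, S i = ∏ i' ∈ Finset.univ.filter (fun i' => tt i' ≤ tt i), (1 - lam i'))
    (hShat : ∀ i, Shat i = ∏ i' ∈ Finset.univ.filter (fun i' => tt i' ≤ tt i), (1 - lamhat i'))
    (c : ℝ) (hc : 0 < c)
    (hSJ : c ≤ S ⟨J - 1, Nat.sub_lt hJ one_pos⟩)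
    (j : Fin J) (M : ℝ)
    (hM : ∀ i, i ≤ j → |Shat i - S i| ≤ M) :
    |lamhat j - lam j| ≤ (2 / c) * M := by
  have hIic : ∀ i, univ.filter (fun i' => tt i' ≤ tt i) = Iic i := fun i => by
    ext; simp [htt.le_iff_le]
  have hSurv : ∀ i, S i = survival lam i := fun i => by rw [hS, hIic, survival]
  have hSurvHat : ∀ i, Shat i = survival lamhat i := fun i => by rw [hShat, hIic, survival]
  have hjJ : j ≤ ⟨J - 1, Nat.sub_lt hJ one_pos⟩ := Fin.le_def.2 (by simp only; omega)
  exact abs_hazard_sub_le_of_abs_survival_sub_le hlam (hlamhat j) hjJ hc (hSurv _ ▸ hSJ)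
    fun i hi => hSurv i ▸ hSurvHat i ▸ hM i hi

/-- Survival-to-hazard stability (discrete time): with product-form survival
functions `S, Ŝ` built from hazards `λ, λ̂ : {t¹,...,t^J} → [0,1]`, if `S(t^J) ≥ c > 0`
and `Ŝ(t^j) > 0` for all `j`, then `|λ̂(t^j) − λ(t^j)| ≤ (2/c) · max_{i ≤ j} |Ŝ(t^i) − S(t^i)|`. -/
theorem survival_to_hazard_stability
    (J : ℕ) (hJ : 0 < J)
    (tt : Fin J → ℝ) (htt : StrictMono tt) (httpos : ∀ i, 0 < tt i)
    (lam lamhat : Fin J → ℝ)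
    (hlam : ∀ i, lam i ∈ Set.Icc (0:ℝ) 1)
    (hlamhat : ∀ i, lamhat i ∈ Set.Icc (0:ℝ) 1)
    (S Shat : Fin J → ℝ)
    (hS : ∀ i, S i = ∏ i' ∈ Finset.univ.filter (fun i' => tt i' ≤ tt i), (1 - lam i'))
    (hShat : ∀ i, Shat i = ∏ i' ∈ Finset.univ.filter (fun i' => tt i' ≤ tt i), (1 - lamhat i'))
    (c : ℝ) (hc : 0 < c)
    (hSJ : c ≤ S ⟨J - 1, Nat.sub_lt hJ one_pos⟩)
    (hShatpos : ∀ i, 0 < Shat i)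
    (j : Fin J) (M : ℝ)
    (hM : ∀ i, i ≤ j → |Shat i - S i| ≤ M) :
    |lamhat j - lam j| ≤ (2 / c) * M :=
  survival_to_hazard_stability_general J hJ tt htt lam lamhat hlam hlamhat S Shat hS hShat c hc hSJ
    j M hM
end

section
/- Mixed-bias remainder in discrete time: with S_*, Ŝ product-form survival functions with hazards λ_*, λ̂ on {t¹<...<t^J}, Ŝ(t^j) ≥ c > 0, and functions G_*, Ĝ with Ĝ(t^{j}) ≥ c > 0 for all j (and G_*(t⁰)=Ĝ(t⁰)=1 at t⁰:=0), the remainder R := -Ŝ(t^J) Σ_{j=1}^J [(Ĝ(t^{j−1}) − G_*(t^{j−1}))/Ĝ(t^{j−1})] · [(Ŝ(t^{j−1})(1−λ̂(t^j)) − S_*(t^{j−1})(1−λ_*(t^j)))/(Ŝ(t^{j−1})(1−λ̂(t^j))) − (Ŝ(t^{j−1}) − S_*(t^{j−1}))/Ŝ(t^{j−1})] equals Ŝ(t^J) Σ_{j=1}^J [(Ĝ(t^{j−1}) − G_*(t^{j−1}))/Ĝ(t^{j−1})] · S_*(t^{j−1})(λ̂(t^j) − λ_*(t^j))/Ŝ(t^j),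 and hence |R| ≤ (J/c²) · max_j |Ĝ(t^{j−1}) − G_*(t^{j−1})| · max_j |λ̂(t^j) − λ_*(t^j)|. -/
/-!
Writing `Ŝ(t^j) = Ŝ(t^{j-1}) (1 - λ̂(t^j))`, the difference of relative errors in the `j`-th
summand of the remainder collapses to `S_*(t^{j-1}) (λ̂(t^j) - λ_*(t^j)) / Ŝ(t^j)`, so every
summand is a product of a censoring error and a hazard error. Since survival functions lie in
`[0, 1]` and `Ĝ, Ŝ ≥ c`, each summand is at most `M₁ M₂ / c²` in absolute value.
-/

/-- Product-form survival function from a discrete hazard: `S(t^n) = ∏_{j=1}^n (1 − λ(t^j))`. -/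
noncomputable def survProd (lam : ℕ → ℝ) (n : ℕ) : ℝ :=
  ∏ j ∈ Finset.Icc 1 n, (1 - lam j)

/-- The discrete-time doubly robust remainder in its original form. -/
noncomputable def Rorig (J : ℕ) (lamS lamSh G Gh : ℕ → ℝ) : ℝ :=
  -(survProd lamSh J) * ∑ j ∈ Finset.Icc 1 J,
    ((Gh (j - 1) - G (j - 1)) / Gh (j - 1)) *
      ((survProd lamSh (j - 1) * (1 - lamSh j) - survProd lamS (j - 1) * (1 - lamS j)) /
          (survProd lamSh (j - 1) * (1 - lamSh j))
        - (survProd lamSh (j - 1) - survProd lamS (j - 1)) / survProd lamSh (j - 1))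

/-- The discrete-time doubly robust remainder in its mixed-bias (product) form. -/
noncomputable def Rprod (J : ℕ) (lamS lamSh G Gh : ℕ → ℝ) : ℝ :=
  survProd lamSh J * ∑ j ∈ Finset.Icc 1 J,
    ((Gh (j - 1) - G (j - 1)) / Gh (j - 1)) *
      (survProd lamS (j - 1) * (lamSh j - lamS j) / survProd lamSh j)

open Finset

lemma mul_sub_mul_div_sub_sub_div {K : Type*} [Field K] {a b u v : K} (hau : a * u ≠ 0) :
    (a * u - b * v) / (a * u) - (a - b) / a = b * (u - v) / (a * u) := by
  have ha : a ≠ 0 := left_ne_zero_of_mul hau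
  have hu : u ≠ 0 := right_ne_zero_of_mul hau
  field_simp
  ring

lemma survProd_of_one_le (lam : ℕ → ℝ) {j : ℕ} (hj : 1 ≤ j) :
    survProd lam j = survProd lam (j - 1) * (1 - lam j) := by
  obtain ⟨k, rfl⟩ := Nat.exists_eq_add_of_le' hj
  rw [survProd, prod_Icc_succ_top (by omega), Nat.add_sub_cancel, survProd]

lemma abs_survProd_le_one {lam : ℕ → ℝ} {n : ℕ}
    (h : ∀ i ∈ Icc 1 n, lam i ∈ Set.Icc 0 1) : |survProd lam n| ≤ 1 := by
  rw [survProd, abs_prod]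
  refine prod_le_one (fun _ _ => abs_nonneg _) fun i hi => abs_le.2 ⟨?_, ?_⟩ <;>
    linarith [(h i hi).1, (h i hi).2]

theorem Rorig_eq_Rprod (J : ℕ) (lamS lamSh G Gh : ℕ → ℝ)
    (hShat : ∀ j ∈ Icc 1 J, survProd lamSh j ≠ 0) :
    Rorig J lamS lamSh G Gh = Rprod J lamS lamSh G Gh := by
  rw [Rorig, Rprod, neg_mul, ← mul_neg, ← sum_neg_distrib]
  congr 1
  refine sum_congr rfl fun j hj => ?_
  have hstep := survProd_of_one_le lamSh (mem_Icc.1 hj).1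
  rw [← mul_neg, ← neg_sub, mul_sub_mul_div_sub_sub_div (hstep ▸ hShat j hj), ← hstep]
  ring

lemma abs_div_mul_mul_div_le {x y s p q c M₁ M₂ : ℝ} (hc : 0 < c) (hp : c ≤ p) (hq : c ≤ q)
    (hs : |s| ≤ 1) (hx : |x| ≤ M₁) (hy : |y| ≤ M₂) :
    |x / p * (s * y / q)| ≤ M₁ * M₂ / c ^ 2 := by
  have hM₁ : 0 ≤ M₁ := (abs_nonneg x).trans hx
  have hM₂ : 0 ≤ M₂ := (abs_nonneg y).trans hy
  have hq₀ : 0 < q := hc.trans_le hq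
  rw [abs_mul, abs_div, abs_div, abs_mul, abs_of_pos (hc.trans_le hp), abs_of_pos hq₀]
  calc |x| / p * (|s| * |y| / q) ≤ M₁ / c * (1 * M₂ / c) := by gcongr
    _ = M₁ * M₂ / c ^ 2 := by ring

theorem abs_Rprod_le {J : ℕ} {lamS lamSh G Gh : ℕ → ℝ} {c M₁ M₂ : ℝ} (hc : 0 < c)
    (hlamS : ∀ j ∈ Icc 1 J, lamS j ∈ Set.Icc 0 1)
    (hlamSh : ∀ j ∈ Icc 1 J, lamSh j ∈ Set.Icc 0 1)
    (hShat : ∀ j ∈ Icc 1 J, c ≤ survProd lamSh j)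
    (hGh : ∀ j ∈ Icc 1 J, c ≤ Gh (j - 1))
    (hG : ∀ j ∈ Icc 1 J, |Gh (j - 1) - G (j - 1)| ≤ M₁)
    (hlam : ∀ j ∈ Icc 1 J, |lamSh j - lamS j| ≤ M₂) :
    |Rprod J lamS lamSh G Gh| ≤ (J / c ^ 2) * M₁ * M₂ := by
  have hterm : ∀ j ∈ Icc 1 J, |(Gh (j - 1) - G (j - 1)) / Gh (j - 1) *
      (survProd lamS (j - 1) * (lamSh j - lamS j) / survProd lamSh j)| ≤ M₁ * M₂ / c ^ 2 :=
    fun j hj => abs_div_mul_mul_div_le hc (hGh j hj) (hShat j hj)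
      (abs_survProd_le_one fun i hi =>
        hlamS i (Icc_subset_Icc_right (Nat.sub_le j 1 |>.trans (mem_Icc.1 hj).2) hi))
      (hG j hj) (hlam j hj)
  rw [Rprod, abs_mul]
  calc _ ≤ 1 * ∑ _j ∈ Icc 1 J, M₁ * M₂ / c ^ 2 :=
        mul_le_mul (abs_survProd_le_one hlamSh)
          ((abs_sum_le_sum_abs _ _).trans (sum_le_sum hterm)) (abs_nonneg _) zero_le_one
    _ = (J / c ^ 2) * M₁ * M₂ := by
        rw [one_mul, sum_const, Nat.card_Icc, Nat.add_sub_cancel, nsmul_eq_mul]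
        ring

theorem mixed_bias_remainder_discrete_general
    (J : ℕ) (lamS lamSh G Gh : ℕ → ℝ)
    (hlamS : ∀ j ∈ Finset.Icc 1 J, lamS j ∈ Set.Ico (0:ℝ) 1)
    (hlamSh : ∀ j ∈ Finset.Icc 1 J, lamSh j ∈ Set.Ico (0:ℝ) 1)
    (c : ℝ) (hc : 0 < c)
    (hShat : ∀ j ≤ J, c ≤ survProd lamSh j)
    (hGh : ∀ j ≤ J, c ≤ Gh j) :
    Rorig J lamS lamSh G Gh = Rprod J lamS lamSh G Gh ∧
    ∀ M₁ M₂ : ℝ, 0 ≤ M₁ → 0 ≤ M₂ →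
      (∀ j ∈ Finset.Icc 1 J, |Gh (j - 1) - G (j - 1)| ≤ M₁) →
      (∀ j ∈ Finset.Icc 1 J, |lamSh j - lamS j| ≤ M₂) →
      |Rorig J lamS lamSh G Gh| ≤ ((J : ℝ) / c ^ 2) * M₁ * M₂ := by
  have hShat' : ∀ j ∈ Icc 1 J, c ≤ survProd lamSh j := fun j hj => hShat j (mem_Icc.1 hj).2
  have heq : Rorig J lamS lamSh G Gh = Rprod J lamS lamSh G Gh :=
    Rorig_eq_Rprod J lamS lamSh G Gh fun j hj => (hc.trans_le (hShat' j hj)).ne'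
  refine ⟨heq, fun M₁ M₂ _ _ hG hlam => heq ▸ abs_Rprod_le hc
    (fun j hj => Set.Ico_subset_Icc_self (hlamS j hj))
    (fun j hj => Set.Ico_subset_Icc_self (hlamSh j hj)) hShat'
    (fun j hj => hGh (j - 1) ((Nat.sub_le j 1).trans (mem_Icc.1 hj).2)) hG hlam⟩

/-- Mixed-bias remainder in discrete time: the remainder `R` equals the
product form, and hence `|R| ≤ (J/c²) · max_j |Ĝ(t^{j−1}) − G_*(t^{j−1})| · max_j |λ̂(t^j) − λ_*(t^j)|`. -/
theorem mixed_bias_remainder_discrete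
    (J : ℕ) (lamS lamSh G Gh : ℕ → ℝ)
    (hlamS : ∀ j ∈ Finset.Icc 1 J, lamS j ∈ Set.Ico (0:ℝ) 1)
    (hlamSh : ∀ j ∈ Finset.Icc 1 J, lamSh j ∈ Set.Ico (0:ℝ) 1)
    (c : ℝ) (hc : 0 < c)
    (hShat : ∀ j ≤ J, c ≤ survProd lamSh j)
    (hGh : ∀ j ≤ J, c ≤ Gh j)
    (hG0 : G 0 = 1) (hGh0 : Gh 0 = 1) :
    Rorig J lamS lamSh G Gh = Rprod J lamS lamSh G Gh ∧
    ∀ M₁ M₂ : ℝ, 0 ≤ M₁ → 0 ≤ M₂ →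
      (∀ j ∈ Finset.Icc 1 J, |Gh (j - 1) - G (j - 1)| ≤ M₁) →
      (∀ j ∈ Finset.Icc 1 J, |lamSh j - lamS j| ≤ M₂) →
      |Rorig J lamS lamSh G Gh| ≤ ((J : ℝ) / c ^ 2) * M₁ * M₂ :=
  mixed_bias_remainder_discrete_general J lamS lamSh G Gh hlamS hlamSh c hc hShat hGh
end
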